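/- arXiv:1807.08141 — 5 statements merged into one kernel-verified Lean document; each statement's English description precedes it below -/
import Mathlib

section
/- The origin is a globally asymptotically stable equilibrium of x(t+1) = f(x(t), t), f(0, ·) = 0, if there exists W : ℝⁿ × ℕ → ℝ with k₁(‖ξ‖) ≤ W(ξ, τ) ≤ k₂(‖ξ‖, τ) for all (ξ, τ) (k₁ ∈ 𝒦∞, k₂(·, τ) ∈ 𝒦∞ for each τ) and W(f(ξ, τ), τ+1) − W(ξ, τ) ≤ −k₃(‖ξ‖) for all (ξ, τ), where k₃ : ℝ≥0 → ℝ≥0 is continuous and positive definite. In particular, no uniform (τ-independent) upper bound on W is required. -/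
/-!
Along a trajectory `x` started at time `t₀`, the value `W (x t) t` is nonincreasing, so
`k₁ ‖x t‖ ≤ W (x t) t ≤ W (x t₀) t₀ ≤ k₂ ‖x t₀‖ t₀`; since `δ` may depend on `t₀`, continuity of
`k₂ (·, t₀)` at `0` gives stability. For attractivity, the nonincreasing and nonnegative values
`W (x t) t` converge, so their decrements, which dominate `k₃ ‖x t‖`, tend to `0`. The trajectory
stays in a ball of radius `R` because `k₁` is unbounded, and `k₃` has a positive minimum on the
compact interval `[ε, R]`, so eventually `‖x t‖ < ε`.
-/

open Filter

def ClassKInf (k : ℝ → ℝ) : Prop :=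
  ContinuousOn k (Set.Ici 0) ∧ StrictMonoOn k (Set.Ici 0) ∧ k 0 = 0 ∧
    Tendsto k atTop atTop

open Topology Set

namespace ClassKInf

variable {k : ℝ → ℝ}

theorem pos (hk : ClassKInf k) {r : ℝ} (hr : 0 < r) : 0 < k r := by
  simpa only [hk.2.2.1] using hk.2.1 self_mem_Ici (mem_Ici.mpr hr.le) hr

theorem nonneg (hk : ClassKInf k) {r : ℝ} (hr : 0 ≤ r) : 0 ≤ k r :=
  hr.eq_or_lt.elim (fun h => h ▸ hk.2.2.1.ge) fun h => (hk.pos h).le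

theorem lt_of_apply_lt (hk : ClassKInf k) {a b : ℝ} (ha : 0 ≤ a) (hb : 0 ≤ b)
    (h : k a < k b) : a < b :=
  (hk.2.1.lt_iff_lt ha hb).mp h

theorem exists_pos_forall_lt (hk : ClassKInf k) {c : ℝ} (hc : 0 < c) :
    ∃ δ > 0, ∀ r, 0 ≤ r → r < δ → k r < c := by
  have hk0 : Tendsto k (𝓝[≥] 0) (𝓝 0) := by
    simpa only [ContinuousWithinAt, hk.2.2.1] using hk.1 0 self_mem_Ici
  obtain ⟨δ, hδ, hsub⟩ :=
    mem_nhdsGE_iff_exists_Ico_subset.mp (hk0.eventually (eventually_lt_nhds hc))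
  exact ⟨δ, hδ, fun r hr hrδ => hsub ⟨hr, hrδ⟩⟩

theorem bddAbove_preimage_Iic (hk : ClassKInf k) (C : ℝ) : BddAbove (k ⁻¹' Iic C) := by
  obtain ⟨R, hR⟩ := eventually_atTop.mp (hk.2.2.2.eventually_gt_atTop C)
  exact ⟨R, fun r hr => not_lt.mp fun hRr => (hR r hRr.le).not_ge hr⟩

end ClassKInf

theorem tendsto_zero_of_forall_succ_le_sub {V d : ℕ → ℝ} (hd : ∀ t, 0 ≤ d t)
    (hV : BddBelow (range V)) (hstep : ∀ t, V (t + 1) ≤ V t - d t) :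
    Tendsto d atTop (𝓝 0) := by
  have hanti : Antitone V := antitone_nat_of_succ_le fun t => by linarith [hstep t, hd t]
  have hlim := tendsto_atTop_ciInf hanti hV
  have hdiff : Tendsto (fun t => V t - V (t + 1)) atTop (𝓝 0) := by
    simpa only [sub_self] using hlim.sub ((tendsto_add_atTop_iff_nat 1).2 hlim)
  exact squeeze_zero hd (fun t => by linarith [hstep t]) hdiff

theorem tendsto_zero_of_tendsto_comp_zero {ι : Type*} {l : Filter ι} {a : ι → ℝ} {k : ℝ → ℝ}
    {R : ℝ} (hk : ContinuousOn k (Ici 0)) (hkpos : ∀ r > 0, 0 < k r) (ha : ∀ i, 0 ≤ a i)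
    (haR : ∀ i, a i ≤ R) (hka : Tendsto (k ∘ a) l (𝓝 0)) : Tendsto a l (𝓝 0) := by
  refine tendsto_order.2 ⟨fun b hb => Eventually.of_forall fun i => hb.trans_le (ha i),
    fun ε hε => ?_⟩
  obtain ⟨m, hm, hmin⟩ := isCompact_Icc.exists_forall_le'
    (hk.mono fun r hr => hε.le.trans hr.1) fun r hr => hkpos r (hε.trans_le hr.1)
  filter_upwards [hka.eventually (eventually_lt_nhds hm)] with i hi
  by_contra! hεi
  exact (hmin (a i) ⟨hεi, haR i⟩).not_gt hi

section Lyapunov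

variable {E : Type*} [SeminormedAddGroup E] {W : E → ℕ → ℝ} {k1 k3 : ℝ → ℝ} {x : ℕ → E} {t0 : ℕ}

theorem lyapunov_le_initial (hk3 : ∀ r ≥ 0, 0 ≤ k3 r)
    (hx : ∀ t ≥ t0, W (x (t + 1)) (t + 1) ≤ W (x t) t - k3 ‖x t‖) {t : ℕ} (ht : t0 ≤ t) :
    W (x t) t ≤ W (x t0) t0 := by
  induction t, ht using Nat.le_induction with
  | base => rfl
  | succ t ht ih => linarith [hx t ht, hk3 _ (norm_nonneg (x t))]

theorem tendsto_norm_zero_of_lyapunov (hk1 : ClassKInf k1) (hk3cont : ContinuousOn k3 (Ici 0))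
    (hk3pos : ∀ r > 0, 0 < k3 r) (hk3 : ∀ r ≥ 0, 0 ≤ k3 r) (hlb : ∀ ξ τ, k1 ‖ξ‖ ≤ W ξ τ)
    (hx : ∀ t ≥ t0, W (x (t + 1)) (t + 1) ≤ W (x t) t - k3 ‖x t‖) :
    Tendsto (fun t => ‖x t‖) atTop (𝓝 0) := by
  rw [← tendsto_add_atTop_iff_nat t0]
  have hstep : ∀ u, W (x (u + 1 + t0)) (u + 1 + t0) ≤
      W (x (u + t0)) (u + t0) - k3 ‖x (u + t0)‖ := fun u => by
    simpa only [Nat.add_right_comm] using hx (u + t0) (Nat.le_add_left _ _)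
  have hbdd : BddBelow (range fun u => W (x (u + t0)) (u + t0)) :=
    ⟨0, by rintro _ ⟨u, rfl⟩; exact (hk1.nonneg (norm_nonneg _)).trans (hlb _ _)⟩
  obtain ⟨R, hR⟩ := hk1.bddAbove_preimage_Iic (W (x t0) t0)
  exact tendsto_zero_of_tendsto_comp_zero hk3cont hk3pos (fun u => norm_nonneg _)
    (fun u => hR ((hlb _ _).trans (lyapunov_le_initial hk3 hx (Nat.le_add_left _ _))))
    (tendsto_zero_of_forall_succ_le_sub (fun u => hk3 _ (norm_nonneg _)) hbdd hstep)

end Lyapunov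

theorem lyapunov_global_asymptotic_stability_general {n : ℕ}
    (f : EuclideanSpace ℝ (Fin n) → ℕ → EuclideanSpace ℝ (Fin n))
    (s : ℕ → ℕ → EuclideanSpace ℝ (Fin n) → EuclideanSpace ℝ (Fin n))
    (hs0 : ∀ (t0 : ℕ) (x0 : EuclideanSpace ℝ (Fin n)), s t0 t0 x0 = x0)
    (hstep : ∀ (t0 : ℕ) (x0 : EuclideanSpace ℝ (Fin n)) (t : ℕ), t0 ≤ t →
      s (t + 1) t0 x0 = f (s t t0 x0) t)
    (W : EuclideanSpace ℝ (Fin n) → ℕ → ℝ)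
    (k1 : ℝ → ℝ) (k2 : ℝ → ℕ → ℝ) (k3 : ℝ → ℝ)
    (hk1 : ClassKInf k1) (hk2 : ∀ τ : ℕ, ClassKInf (fun r => k2 r τ))
    (hk3cont : ContinuousOn k3 (Set.Ici 0))
    (hk3zero : k3 0 = 0) (hk3pos : ∀ r > (0 : ℝ), 0 < k3 r)
    (hlb : ∀ (ξ : EuclideanSpace ℝ (Fin n)) (τ : ℕ), k1 ‖ξ‖ ≤ W ξ τ)
    (hub : ∀ (ξ : EuclideanSpace ℝ (Fin n)) (τ : ℕ), W ξ τ ≤ k2 ‖ξ‖ τ)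
    (hdec : ∀ (ξ : EuclideanSpace ℝ (Fin n)) (τ : ℕ),
      W (f ξ τ) (τ + 1) - W ξ τ ≤ -k3 ‖ξ‖) :
    (∀ ε > (0 : ℝ), ∀ t0 : ℕ, ∃ δ > (0 : ℝ),
        ∀ x0 : EuclideanSpace ℝ (Fin n), ‖x0‖ < δ →
          ∀ t : ℕ, t0 ≤ t → ‖s t t0 x0‖ < ε) ∧
    (∀ (t0 : ℕ) (x0 : EuclideanSpace ℝ (Fin n)),
        Tendsto (fun t : ℕ => ‖s t t0 x0‖) atTop (nhds 0)) := by
  have hk3 : ∀ r ≥ 0, 0 ≤ k3 r := fun r hr =>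
    hr.eq_or_lt.elim (fun h => h ▸ hk3zero.ge) fun h => (hk3pos r h).le
  have hdecay : ∀ t0 x0, ∀ t ≥ t0,
      W (s (t + 1) t0 x0) (t + 1) ≤ W (s t t0 x0) t - k3 ‖s t t0 x0‖ := fun t0 x0 t ht => by
    rw [hstep t0 x0 t ht]
    linarith [hdec (s t t0 x0) t]
  refine ⟨fun ε hε t0 => ?_, fun t0 x0 =>
    tendsto_norm_zero_of_lyapunov hk1 hk3cont hk3pos hk3 hlb (hdecay t0 x0)⟩
  obtain ⟨δ, hδ, hk2δ⟩ := (hk2 t0).exists_pos_forall_lt (hk1.pos hε)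
  refine ⟨δ, hδ, fun x0 hx0 t ht => hk1.lt_of_apply_lt (norm_nonneg _) hε.le ?_⟩
  calc k1 ‖s t t0 x0‖ ≤ W (s t t0 x0) t := hlb _ _
    _ ≤ W (s t0 t0 x0) t0 := lyapunov_le_initial (x := fun t => s t t0 x0) hk3 (hdecay t0 x0) ht
    _ ≤ k2 ‖x0‖ t0 := by rw [hs0]; exact hub _ _
    _ < k1 ε := hk2δ _ (norm_nonneg _) hx0

/-- Lyapunov theorem for global asymptotic stability of the origin of
`x(t+1) = f(x(t), t)`: if `k₁(‖ξ‖) ≤ W(ξ,τ) ≤ k₂(‖ξ‖,τ)` (`k₁ ∈ 𝒦∞`, `k₂(·,τ) ∈ 𝒦∞` for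
each `τ`) and `W(f(ξ,τ), τ+1) − W(ξ,τ) ≤ −k₃(‖ξ‖)` with `k₃` continuous and positive
definite, then the origin is stable and globally attractive. No τ-uniform upper bound
on `W` is required. -/
theorem lyapunov_global_asymptotic_stability {n : ℕ}
    (f : EuclideanSpace ℝ (Fin n) → ℕ → EuclideanSpace ℝ (Fin n))
    (s : ℕ → ℕ → EuclideanSpace ℝ (Fin n) → EuclideanSpace ℝ (Fin n))
    (hf0 : ∀ τ : ℕ, f 0 τ = 0)
    (hs0 : ∀ (t0 : ℕ) (x0 : EuclideanSpace ℝ (Fin n)), s t0 t0 x0 = x0)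
    (hstep : ∀ (t0 : ℕ) (x0 : EuclideanSpace ℝ (Fin n)) (t : ℕ), t0 ≤ t →
      s (t + 1) t0 x0 = f (s t t0 x0) t)
    (W : EuclideanSpace ℝ (Fin n) → ℕ → ℝ)
    (k1 : ℝ → ℝ) (k2 : ℝ → ℕ → ℝ) (k3 : ℝ → ℝ)
    (hk1 : ClassKInf k1) (hk2 : ∀ τ : ℕ, ClassKInf (fun r => k2 r τ))
    (hk3cont : ContinuousOn k3 (Set.Ici 0))
    (hk3zero : k3 0 = 0) (hk3pos : ∀ r > (0 : ℝ), 0 < k3 r)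
    (hlb : ∀ (ξ : EuclideanSpace ℝ (Fin n)) (τ : ℕ), k1 ‖ξ‖ ≤ W ξ τ)
    (hub : ∀ (ξ : EuclideanSpace ℝ (Fin n)) (τ : ℕ), W ξ τ ≤ k2 ‖ξ‖ τ)
    (hdec : ∀ (ξ : EuclideanSpace ℝ (Fin n)) (τ : ℕ),
      W (f ξ τ) (τ + 1) - W ξ τ ≤ -k3 ‖ξ‖) :
    (∀ ε > (0 : ℝ), ∀ t0 : ℕ, ∃ δ > (0 : ℝ),
        ∀ x0 : EuclideanSpace ℝ (Fin n), ‖x0‖ < δ →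
          ∀ t : ℕ, t0 ≤ t → ‖s t t0 x0‖ < ε) ∧
    (∀ (t0 : ℕ) (x0 : EuclideanSpace ℝ (Fin n)),
        Tendsto (fun t : ℕ => ‖s t t0 x0‖) atTop (nhds 0)) :=
  lyapunov_global_asymptotic_stability_general f s hs0 hstep W k1 k2 k3 hk1 hk2 hk3cont hk3zero
    hk3pos hlb hub hdec
end

section
/- Under the Lyapunov conditions k₁(‖ξ‖) ≤ W(ξ, τ) with k₁ ∈ 𝒦∞ and one-step decrease ΔW ≤ −k₃(‖ξ‖) with k₃ positive definite satisfying inf_{z≥c} k₃(z) > 0 for all c > 0, every trajectory of x(t+1) = f(x(t), t) converges to the origin: lim_{t→∞} ‖s(t, t₀, x₀)‖ = 0 for every x₀ ∈ ℝⁿ and t₀ ∈ ℕ. -/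
/-!
`W` is bounded below along every trajectory and drops by at least `k₃(‖x(t)‖) ≥ 0` at each
step, so the series `∑ k₃(‖x(t)‖)` is dominated by telescoping and converges; hence
`k₃(‖x(t)‖) → 0`. Since `k₃` is bounded away from zero on every `[c, ∞)`, this forces
`‖x(t)‖ → 0`.
-/

open Filter

open Topology

theorem sum_range_le_sub_of_add_le {V a : ℕ → ℝ} (h : ∀ t, V (t + 1) + a t ≤ V t) (T : ℕ) :
    ∑ i ∈ Finset.range T, a i ≤ V 0 - V T := by
  induction T with
  | zero => simp
  | succ T ih =>
    rw [Finset.sum_range_succ]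
    linarith [h T]

theorem tendsto_atTop_zero_of_add_le {V a : ℕ → ℝ} {m : ℝ} (hV : ∀ t, m ≤ V t)
    (ha : ∀ t, 0 ≤ a t) (h : ∀ t, V (t + 1) + a t ≤ V t) :
    Tendsto a atTop (𝓝 0) :=
  (summable_of_sum_range_le (c := V 0 - m) ha fun T =>
    (sum_range_le_sub_of_add_le h T).trans (by linarith [hV T])).tendsto_atTop_zero

theorem le_of_sInf_image_Ici_pos {k : ℝ → ℝ} {c z : ℝ} (hk : 0 < sInf (k '' Set.Ici c))
    (hz : c ≤ z) : sInf (k '' Set.Ici c) ≤ k z := by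
  have hbdd : BddBelow (k '' Set.Ici c) := by
    by_contra h
    rw [Real.sInf_of_not_bddBelow h] at hk
    exact hk.false
  exact csInf_le hbdd ⟨z, hz, rfl⟩

theorem tendsto_zero_of_tendsto_comp_zero_s5 {α : Type*} {l : Filter α} {k : ℝ → ℝ} {u : α → ℝ}
    (hk : ∀ c > (0 : ℝ), 0 < sInf (k '' Set.Ici c)) (hu : ∀ x, 0 ≤ u x)
    (hku : Tendsto (k ∘ u) l (𝓝 0)) : Tendsto u l (𝓝 0) := by
  refine tendsto_order.2 ⟨fun b hb => .of_forall fun x => hb.trans_le (hu x), fun ε hε => ?_⟩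
  filter_upwards [(tendsto_order.1 hku).2 _ (hk ε hε)] with x hx
  by_contra! hεx
  exact (le_of_sInf_image_Ici_pos (hk ε hε) hεx).not_gt hx

theorem lyapunov_global_attractivity_general {n : ℕ}
    (f : EuclideanSpace ℝ (Fin n) → ℕ → EuclideanSpace ℝ (Fin n))
    (s : ℕ → ℕ → EuclideanSpace ℝ (Fin n) → EuclideanSpace ℝ (Fin n))
    (hstep : ∀ (t0 : ℕ) (x0 : EuclideanSpace ℝ (Fin n)) (t : ℕ), t0 ≤ t →
      s (t + 1) t0 x0 = f (s t t0 x0) t)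
    (W : EuclideanSpace ℝ (Fin n) → ℕ → ℝ)
    (k1 : ℝ → ℝ) (k3 : ℝ → ℝ)
    (hk1 : ClassKInf k1)
    (hk3zero : k3 0 = 0) (hk3pos : ∀ r > (0 : ℝ), 0 < k3 r)
    (hk3inf : ∀ c > (0 : ℝ), 0 < sInf (k3 '' Set.Ici c))
    (hlb : ∀ (ξ : EuclideanSpace ℝ (Fin n)) (τ : ℕ), k1 ‖ξ‖ ≤ W ξ τ)
    (hdec : ∀ (ξ : EuclideanSpace ℝ (Fin n)) (τ : ℕ),
      W (f ξ τ) (τ + 1) - W ξ τ ≤ -k3 ‖ξ‖) :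
    ∀ (t0 : ℕ) (x0 : EuclideanSpace ℝ (Fin n)),
      Tendsto (fun t : ℕ => ‖s t t0 x0‖) atTop (nhds 0) := by
  intro t0 x0
  obtain ⟨-, hk1mono, hk1zero, -⟩ := hk1
  have hW : ∀ ξ τ, 0 ≤ W ξ τ := fun ξ τ =>
    hk1zero ▸ (hk1mono.monotoneOn Set.self_mem_Ici (norm_nonneg ξ) (norm_nonneg ξ)).trans
      (hlb ξ τ)
  have hk3 : ∀ r, 0 ≤ r → 0 ≤ k3 r := fun r hr =>
    hr.eq_or_lt.elim (fun h => h ▸ hk3zero.ge) fun h => (hk3pos r h).le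
  have hk3_tendsto : Tendsto (fun t => k3 ‖s (t + t0) t0 x0‖) atTop (𝓝 0) :=
    tendsto_atTop_zero_of_add_le (V := fun t => W (s (t + t0) t0 x0) (t + t0))
      (fun t => hW _ _) (fun t => hk3 _ (norm_nonneg _)) fun t => by
        rw [add_right_comm t 1 t0, hstep t0 x0 _ (Nat.le_add_left _ _)]
        linarith [hdec (s (t + t0) t0 x0) (t + t0)]
  exact (tendsto_add_atTop_iff_nat t0).1
    (tendsto_zero_of_tendsto_comp_zero_s5 hk3inf (fun _ => norm_nonneg _) hk3_tendsto)

/-- Under the Lyapunov conditions `k₁(‖ξ‖) ≤ W(ξ,τ)` with `k₁ ∈ 𝒦∞` and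
one-step decrease `W(f(ξ,τ),τ+1) − W(ξ,τ) ≤ −k₃(‖ξ‖)` with `k₃` positive definite
satisfying `inf_{z ≥ c} k₃(z) > 0` for all `c > 0`, every trajectory of
`x(t+1) = f(x(t),t)` converges to the origin. -/
theorem lyapunov_global_attractivity {n : ℕ}
    (f : EuclideanSpace ℝ (Fin n) → ℕ → EuclideanSpace ℝ (Fin n))
    (s : ℕ → ℕ → EuclideanSpace ℝ (Fin n) → EuclideanSpace ℝ (Fin n))
    (hf0 : ∀ τ : ℕ, f 0 τ = 0)
    (hs0 : ∀ (t0 : ℕ) (x0 : EuclideanSpace ℝ (Fin n)), s t0 t0 x0 = x0)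
    (hstep : ∀ (t0 : ℕ) (x0 : EuclideanSpace ℝ (Fin n)) (t : ℕ), t0 ≤ t →
      s (t + 1) t0 x0 = f (s t t0 x0) t)
    (W : EuclideanSpace ℝ (Fin n) → ℕ → ℝ)
    (k1 : ℝ → ℝ) (k3 : ℝ → ℝ)
    (hk1 : ClassKInf k1)
    (hk3cont : ContinuousOn k3 (Set.Ici 0))
    (hk3zero : k3 0 = 0) (hk3pos : ∀ r > (0 : ℝ), 0 < k3 r)
    (hk3inf : ∀ c > (0 : ℝ), 0 < sInf (k3 '' Set.Ici c))
    (hlb : ∀ (ξ : EuclideanSpace ℝ (Fin n)) (τ : ℕ), k1 ‖ξ‖ ≤ W ξ τ)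
    (hdec : ∀ (ξ : EuclideanSpace ℝ (Fin n)) (τ : ℕ),
      W (f ξ τ) (τ + 1) - W ξ τ ≤ -k3 ‖ξ‖) :
    ∀ (t0 : ℕ) (x0 : EuclideanSpace ℝ (Fin n)),
      Tendsto (fun t : ℕ => ‖s t t0 x0‖) atTop (nhds 0) :=
  lyapunov_global_attractivity_general f s hstep W k1 k3 hk1 hk3zero hk3pos hk3inf hlb hdec
end

section
/- Along the recursive least squares error dynamics θ̃(k+1) = θ̃(k) − α(k) Σ(k) φ(k+1) φᵀ(k+1) θ̃(k), with α(k) = (σ² + φᵀ(k+1) Σ(k) φ(k+1))⁻¹ and Σ⁻¹(k+1) = Σ⁻¹(k) + σ⁻² φ(k+1) φᵀ(k+1), the Lyapunov function W_C(ξ, τ) = ξᵀ Σ⁻¹(τ) ξ has one-step difference exactly ΔW_C(k) = − (θ̃ᵀ(k) φ(k+1))² / (σ² + φᵀ(k+1) Σ(k) φ(k+1)). -/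
open Matrix

/-!
Write `β = φᵀ Σ φ`, `c = σ²` and `t = (φᵀ θ̃) / (c + β)`, so that `θ̃⁺ = θ̃ − t Σ φ`. Since `Σ⁻¹ Σ φ = φ`,
the old quadratic form changes by `−2 t (φᵀ θ̃) + t² β`, and the rank-one term of the new `Σ⁻¹`
contributes `c⁻¹ (φᵀ θ̃⁺)² = c⁻¹ (φᵀ θ̃ − t β)² = c (φᵀ θ̃)² / (c + β)²`. These add up to
`−(φᵀ θ̃)² / (c + β)`.
-/

namespace Matrix

variable {K ι : Type*} [Field K] [Fintype ι]

theorem dotProduct_vecMulVec_self_mulVec (v x : ι → K) :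
    x ⬝ᵥ (vecMulVec v v *ᵥ x) = (v ⬝ᵥ x) ^ 2 := by
  rw [vecMulVec_mulVec, op_smul_eq_smul, dotProduct_smul, smul_eq_mul, dotProduct_comm x v, sq]

theorem IsSymm.dotProduct_mulVec_comm {P : Matrix ι ι K} (hP : P.IsSymm) (x y : ι → K) :
    x ⬝ᵥ (P *ᵥ y) = y ⬝ᵥ (P *ᵥ x) := by
  rw [dotProduct_mulVec, ← mulVec_transpose, hP.eq, dotProduct_comm]

theorem IsSymm.dotProduct_mulVec_sub_smul {P : Matrix ι ι K} (hP : P.IsSymm) {v w : ι → K}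
    (hPw : P *ᵥ w = v) (x : ι → K) (t : K) :
    (x - t • w) ⬝ᵥ (P *ᵥ (x - t • w)) =
      x ⬝ᵥ (P *ᵥ x) - 2 * t * (v ⬝ᵥ x) + t ^ 2 * (v ⬝ᵥ w) := by
  have hwx : w ⬝ᵥ (P *ᵥ x) = v ⬝ᵥ x := by rw [hP.dotProduct_mulVec_comm, hPw, dotProduct_comm]
  simp only [mulVec_sub, mulVec_smul, hPw, dotProduct_sub, sub_dotProduct, dotProduct_smul,
    smul_dotProduct, smul_eq_mul, hwx]
  rw [dotProduct_comm x v, dotProduct_comm w v]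
  ring

theorem IsSymm.rls_step_dotProduct_mulVec_sub {P : Matrix ι ι K} (hP : P.IsSymm) {v w : ι → K}
    (hPw : P *ᵥ w = v) (x : ι → K) {c : K} (hc : c ≠ 0) (hcβ : c + v ⬝ᵥ w ≠ 0) :
    (x - ((c + v ⬝ᵥ w)⁻¹ * (v ⬝ᵥ x)) • w) ⬝ᵥ
        ((P + c⁻¹ • vecMulVec v v) *ᵥ (x - ((c + v ⬝ᵥ w)⁻¹ * (v ⬝ᵥ x)) • w))
      - x ⬝ᵥ (P *ᵥ x) = -(x ⬝ᵥ v) ^ 2 / (c + v ⬝ᵥ w) := by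
  set t := (c + v ⬝ᵥ w)⁻¹ * (v ⬝ᵥ x)
  have hv : v ⬝ᵥ (x - t • w) = v ⬝ᵥ x - t * (v ⬝ᵥ w) := by
    rw [dotProduct_sub, dotProduct_smul, smul_eq_mul]
  rw [add_mulVec, dotProduct_add, smul_mulVec, dotProduct_smul, smul_eq_mul,
    dotProduct_vecMulVec_self_mulVec, hv, hP.dotProduct_mulVec_sub_smul hPw, dotProduct_comm x v]
  simp only [t]
  field_simp
  ring

end Matrix

/-- Along the RLS error dynamics
`θ̃(k+1) = θ̃(k) − α(k) Σ(k) φ(k+1) φᵀ(k+1) θ̃(k)` with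
`α(k) = (σ² + φᵀ(k+1) Σ(k) φ(k+1))⁻¹` and `Σ⁻¹(k+1) = Σ⁻¹(k) + σ⁻² φ(k+1) φᵀ(k+1)`,
the Lyapunov function `W_C(ξ,τ) = ξᵀ Σ⁻¹(τ) ξ` has one-step difference exactly
`ΔW_C(k) = −(θ̃ᵀ(k) φ(k+1))² / (σ² + φᵀ(k+1) Σ(k) φ(k+1))`. -/
theorem rls_lyapunov_difference_identity {n : ℕ}
    (σ : ℝ) (hσ : 0 < σ)
    (φ : ℕ → Fin n → ℝ)
    (Smat Sinv : ℕ → Matrix (Fin n) (Fin n) ℝ)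
    (hpd : ∀ k : ℕ, (Smat k).PosDef)
    (hinv : ∀ k : ℕ, Sinv k = (Smat k)⁻¹)
    (hrec : ∀ k : ℕ, Sinv (k + 1) =
      Sinv k + (σ ^ 2)⁻¹ • Matrix.vecMulVec (φ (k + 1)) (φ (k + 1)))
    (α : ℕ → ℝ)
    (hα : ∀ k : ℕ, α k = (σ ^ 2 + φ (k + 1) ⬝ᵥ (Smat k *ᵥ φ (k + 1)))⁻¹)
    (θt : ℕ → Fin n → ℝ)
    (hθ : ∀ k : ℕ, θt (k + 1) =
      θt k - (α k * (φ (k + 1) ⬝ᵥ θt k)) • (Smat k *ᵥ φ (k + 1))) :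
    ∀ k : ℕ,
      θt (k + 1) ⬝ᵥ (Sinv (k + 1) *ᵥ θt (k + 1)) - θt k ⬝ᵥ (Sinv k *ᵥ θt k) =
        -(θt k ⬝ᵥ φ (k + 1)) ^ 2 / (σ ^ 2 + φ (k + 1) ⬝ᵥ (Smat k *ᵥ φ (k + 1))) := by
  intro k
  have hS := hpd k
  have hSymm : (Sinv k).IsSymm := by
    rw [hinv k]
    exact (isHermitian_iff_isSymm.mp hS.isHermitian).inv
  have hgain : Sinv k *ᵥ (Smat k *ᵥ φ (k + 1)) = φ (k + 1) := by
    rw [hinv k, mulVec_mulVec, nonsing_inv_mul _ ((isUnit_iff_isUnit_det _).mp hS.isUnit),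
      one_mulVec]
  have hβ : 0 ≤ φ (k + 1) ⬝ᵥ (Smat k *ᵥ φ (k + 1)) := by
    simpa using hS.posSemidef.dotProduct_mulVec_nonneg (φ (k + 1))
  rw [hθ k, hrec k, hα k]
  exact hSymm.rls_step_dotProduct_mulVec_sub hgain (θt k) (by positivity) (by positivity)
end

section
/- For the recursive LSE error dynamics, the one-step difference of W_C(ξ, τ) = ξᵀ Σ⁻¹(τ) ξ is strictly negative at step k whenever θ̃(k) and φ(k+1) are not orthogonal, i.e., θ̃ᵀ(k) φ(k+1) ≠ 0 implies W_C(θ̃(k+1), k+1) < W_C(θ̃(k), k). -/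
/-!
One step of recursive least squares is a rank-one update: the information matrix gains
`σ⁻² φ φᵀ`, while the error moves along `Σ φ`. Expanding the quadratic form, the error's
component along `φ` is shrunk by the factor `σ² / (σ² + φᵀ Σ φ)`, and the two changes combine
to the exact identity `W(k+1) = W(k) - α (θ̃ᵀ φ)²` with `α > 0`.
-/

open Matrix

section
variable {ι R : Type*} [Fintype ι]

def rlsStep [Field R] (c : R) (P : Matrix ι ι R) (v θ : ι → R) : ι → R :=
  θ - ((c + v ⬝ᵥ (P *ᵥ v))⁻¹ * (v ⬝ᵥ θ)) • (P *ᵥ v)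

theorem rlsStep_dotProduct_mulVec [DecidableEq ι] [Field R] {c : R} (hc : c ≠ 0) {P Q : Matrix ι ι R}
    (hP : Pᵀ = P) (hQP : Q * P = 1) {v : ι → R} (hs : c + v ⬝ᵥ (P *ᵥ v) ≠ 0) (θ : ι → R) :
    rlsStep c P v θ ⬝ᵥ ((Q + c⁻¹ • vecMulVec v v) *ᵥ rlsStep c P v θ) =
      θ ⬝ᵥ (Q *ᵥ θ) - (c + v ⬝ᵥ (P *ᵥ v))⁻¹ * (v ⬝ᵥ θ) ^ 2 := by
  unfold rlsStep
  set a := (c + v ⬝ᵥ (P *ᵥ v))⁻¹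
  set β := v ⬝ᵥ θ
  have ha : a * (c + v ⬝ᵥ (P *ᵥ v)) = 1 := inv_mul_cancel₀ hs
  have hQθ' : Q *ᵥ (θ - (a * β) • (P *ᵥ v)) = Q *ᵥ θ - (a * β) • v := by
    rw [mulVec_sub, mulVec_smul, mulVec_mulVec, hQP, one_mulVec]
  have hPvQθ : (P *ᵥ v) ⬝ᵥ (Q *ᵥ θ) = β := by
    rw [← hP, mulVec_transpose, ← dotProduct_mulVec, mulVec_mulVec, mul_eq_one_comm.mp hQP,
      one_mulVec]
  have hvθ' : v ⬝ᵥ (θ - (a * β) • (P *ᵥ v)) = a * c * β := by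
    rw [dotProduct_sub, dotProduct_smul, smul_eq_mul]
    linear_combination (-β) * ha
  have hcancel : c⁻¹ * (a * c * β * (a * c * β)) = a * β * (a * c * β) := by
    rw [show a * c * β * (a * c * β) = c * (a * β * (a * c * β)) by ring,
      inv_mul_cancel_left₀ hc]
  rw [add_mulVec, smul_mulVec, vecMulVec_mulVec, op_smul_eq_smul, hvθ', dotProduct_add,
    dotProduct_smul, dotProduct_smul, dotProduct_comm _ v, hvθ', hQθ', dotProduct_sub,
    dotProduct_smul, dotProduct_comm _ v, hvθ', sub_dotProduct, smul_dotProduct, hPvQθ]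
  simp only [smul_eq_mul, hcancel]
  ring

theorem rlsStep_dotProduct_mulVec_lt [DecidableEq ι] {c : ℝ} (hc : 0 < c) {P : Matrix ι ι ℝ} (hP : P.PosDef)
    {v θ : ι → ℝ} (hvθ : v ⬝ᵥ θ ≠ 0) :
    rlsStep c P v θ ⬝ᵥ ((P⁻¹ + c⁻¹ • vecMulVec v v) *ᵥ rlsStep c P v θ) <
      θ ⬝ᵥ (P⁻¹ *ᵥ θ) := by
  have hden : 0 < c + v ⬝ᵥ (P *ᵥ v) := add_pos_of_pos_of_nonneg hc
    (hP.posSemidef.dotProduct_mulVec_nonneg v)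
  have hinv : P⁻¹ * P = 1 := P.nonsing_inv_mul (P.isUnit_iff_isUnit_det.mp hP.isUnit)
  rw [rlsStep_dotProduct_mulVec hc.ne' (isHermitian_iff_isSymm.mp hP.1) hinv hden.ne']
  exact sub_lt_self _ (mul_pos (inv_pos.mpr hden) (sq_pos_of_ne_zero hvθ))
end

/-- For the recursive LSE error dynamics, the one-step difference of
`W_C(ξ,τ) = ξᵀ Σ⁻¹(τ) ξ` is strictly negative at step `k` whenever `θ̃(k)` and `φ(k+1)`
are not orthogonal. -/
theorem rls_lyapunov_strict_decrease {n : ℕ}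
    (σ : ℝ) (hσ : 0 < σ)
    (φ : ℕ → Fin n → ℝ)
    (Smat Sinv : ℕ → Matrix (Fin n) (Fin n) ℝ)
    (hpd : ∀ k : ℕ, (Smat k).PosDef)
    (hinv : ∀ k : ℕ, Sinv k = (Smat k)⁻¹)
    (hrec : ∀ k : ℕ, Sinv (k + 1) =
      Sinv k + (σ ^ 2)⁻¹ • Matrix.vecMulVec (φ (k + 1)) (φ (k + 1)))
    (α : ℕ → ℝ)
    (hα : ∀ k : ℕ, α k = (σ ^ 2 + φ (k + 1) ⬝ᵥ (Smat k *ᵥ φ (k + 1)))⁻¹)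
    (θt : ℕ → Fin n → ℝ)
    (hθ : ∀ k : ℕ, θt (k + 1) =
      θt k - (α k * (φ (k + 1) ⬝ᵥ θt k)) • (Smat k *ᵥ φ (k + 1))) :
    ∀ k : ℕ, θt k ⬝ᵥ φ (k + 1) ≠ 0 →
      θt (k + 1) ⬝ᵥ (Sinv (k + 1) *ᵥ θt (k + 1)) < θt k ⬝ᵥ (Sinv k *ᵥ θt k) := by
  intro k hne
  have hstep : θt (k + 1) = rlsStep (σ ^ 2) (Smat k) (φ (k + 1)) (θt k) := by
    rw [hθ, hα]; rfl
  rw [hstep, hrec, hinv]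
  exact rlsStep_dotProduct_mulVec_lt (pow_pos hσ 2) (hpd k) (by rwa [dotProduct_comm])
end

section
/- For the distributed estimator with common gain αᵢ = α_B := (σ² + Σ_{j=1}^m φⱼᵀ(k+1) Σⱼ(k) φⱼ(k+1))⁻¹, the 'Σ_B⁻¹(k)-part' of the Lyapunov difference satisfies the exact identity ΔW̄_B = −α_B (θ̃_Bᵀ φ)² (2 − α_B φᵀ Σ_B φ), where φ = φ(k+1), Σ_B = Σ_B(k), θ̃_B = θ̃_B(k), and θ̃_B(k+1) = (I − α_B Σ_B φ φᵀ) θ̃_B(k). -/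
/-!
Writing `c = α (φ ⬝ θ)`, the update is `θ' = θ - c Σ φ`. Expanding the quadratic form of `Σ⁻¹`,
symmetry of `Σ` collapses both cross terms to `c (θ ⬝ φ)` and the square term to `c² φᵀ Σ φ`,
so the difference is `c (c φᵀ Σ φ - 2 θ ⬝ φ)`, which is the claimed identity.
-/

open Matrix

namespace Matrix

theorem isUnit_blockDiagonal' {o R : Type*} [Fintype o] [DecidableEq o] [CommRing R]
    {m' : o → Type*} [∀ i, Fintype (m' i)] [∀ i, DecidableEq (m' i)]
    {M : (i : o) → Matrix (m' i) (m' i) R} (hM : ∀ i, IsUnit (M i)) :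
    IsUnit (blockDiagonal' M) :=
  (Pi.isUnit_iff.mpr hM).map (blockDiagonal'RingHom m' R)

variable {n R : Type*} [Fintype n] [DecidableEq n] [CommRing R]

theorem IsSymm.dotProduct_nonsing_inv_mulVec_sub_smul_mulVec {S : Matrix n n R} (hS : S.IsSymm)
    (hSu : IsUnit S) (θ φ : n → R) (c : R) :
    (θ - c • S *ᵥ φ) ⬝ᵥ (S⁻¹ *ᵥ (θ - c • S *ᵥ φ)) - θ ⬝ᵥ (S⁻¹ *ᵥ θ) =
      c * (c * (φ ⬝ᵥ (S *ᵥ φ)) - 2 * (θ ⬝ᵥ φ)) := by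
  have hdet : IsUnit S.det := (isUnit_iff_isUnit_det S).mp hSu
  have hcancel : S⁻¹ *ᵥ (S *ᵥ φ) = φ := by
    rw [mulVec_mulVec, nonsing_inv_mul S hdet, one_mulVec]
  have hcross : (S *ᵥ φ) ⬝ᵥ (S⁻¹ *ᵥ θ) = φ ⬝ᵥ θ := by
    rw [dotProduct_mulVec, ← vecMul_transpose, hS.eq, vecMul_vecMul, mul_nonsing_inv S hdet,
      vecMul_one]
  simp only [mulVec_sub, mulVec_smul, hcancel, sub_dotProduct, dotProduct_sub, smul_dotProduct,
    dotProduct_smul, hcross, smul_eq_mul, dotProduct_comm (S *ᵥ φ) φ, dotProduct_comm φ θ]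
  ring

end Matrix

theorem distributed_frozen_lyapunov_difference_general {m : ℕ} (nd : Fin m → ℕ)
    (Si : (i : Fin m) → Matrix (Fin (nd i)) (Fin (nd i)) ℝ)
    (hSi : ∀ i : Fin m, (Si i).PosDef)
    (SB : Matrix ((i : Fin m) × Fin (nd i)) ((i : Fin m) × Fin (nd i)) ℝ)
    (hSB : SB = Matrix.blockDiagonal' Si)
    (φ : ((i : Fin m) × Fin (nd i)) → ℝ)
    (αB : ℝ)
    (θt θtnew : ((i : Fin m) × Fin (nd i)) → ℝ)
    (hθtnew : θtnew = θt - (αB * (φ ⬝ᵥ θt)) • (SB *ᵥ φ)) :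
    θtnew ⬝ᵥ (SB⁻¹ *ᵥ θtnew) - θt ⬝ᵥ (SB⁻¹ *ᵥ θt) =
      -(αB * (θt ⬝ᵥ φ) ^ 2 * (2 - αB * (φ ⬝ᵥ (SB *ᵥ φ)))) := by
  have hsymm : SB.IsSymm := by
    rw [hSB, ← isHermitian_iff_isSymm, isHermitian_blockDiagonal'_iff]
    exact fun i => (hSi i).isHermitian
  have hunit : IsUnit SB := hSB ▸ isUnit_blockDiagonal' fun i => (hSi i).isUnit
  rw [hθtnew, hsymm.dotProduct_nonsing_inv_mulVec_sub_smul_mulVec hunit, dotProduct_comm φ θt]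
  ring

/-- For the distributed estimator with common gain
`α_B = (σ² + Σⱼ φⱼᵀ Σⱼ φⱼ)⁻¹`, the `Σ_B⁻¹(k)`-part of the Lyapunov difference
satisfies the exact identity `ΔW̄_B = −α_B (θ̃_Bᵀ φ)² (2 − α_B φᵀ Σ_B φ)`, where
`θ̃_B(k+1) = (I − α_B Σ_B φ φᵀ) θ̃_B(k)`. -/
theorem distributed_frozen_lyapunov_difference {m : ℕ} (nd : Fin m → ℕ)
    (Si : (i : Fin m) → Matrix (Fin (nd i)) (Fin (nd i)) ℝ)
    (hSi : ∀ i : Fin m, (Si i).PosDef)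
    (SB : Matrix ((i : Fin m) × Fin (nd i)) ((i : Fin m) × Fin (nd i)) ℝ)
    (hSB : SB = Matrix.blockDiagonal' Si)
    (φi : (i : Fin m) → Fin (nd i) → ℝ)
    (φ : ((i : Fin m) × Fin (nd i)) → ℝ)
    (hφ : ∀ p : (i : Fin m) × Fin (nd i), φ p = φi p.1 p.2)
    (σ : ℝ) (hσ : 0 < σ)
    (αB : ℝ) (hαB : αB = (σ ^ 2 + ∑ j, φi j ⬝ᵥ (Si j *ᵥ φi j))⁻¹)
    (θt θtnew : ((i : Fin m) × Fin (nd i)) → ℝ)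
    (hθtnew : θtnew = θt - (αB * (φ ⬝ᵥ θt)) • (SB *ᵥ φ)) :
    θtnew ⬝ᵥ (SB⁻¹ *ᵥ θtnew) - θt ⬝ᵥ (SB⁻¹ *ᵥ θt) =
      -(αB * (θt ⬝ᵥ φ) ^ 2 * (2 - αB * (φ ⬝ᵥ (SB *ᵥ φ)))) :=
  distributed_frozen_lyapunov_difference_general nd Si hSi SB hSB φ αB θt θtnew hθtnew
end
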